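/- arXiv:1608.04091 — 2 statements merged into one kernel-verified Lean document; each statement's English description precedes it below -/
import Mathlib

section
/- If k ∈ −0⁺A, then the effective domain of φ_{A,k} equals A + {tk : t > 0}, and φ_{A,k}(y) = −∞ if and only if y + ℝk ⊆ A; in particular φ_{A,k} is real-valued on dom φ_{A,k} \ A. -/
/-- `phi A k y = inf { t : ℝ | y ∈ A + t • k }`, valued in `EReal`
(`⊤` plays the role of the symbol `ν = inf ∅`, `⊥` is `-∞`). -/
noncomputable def phi {Y : Type*} [AddCommGroup Y] [Module ℝ Y]
    (A : Set Y) (k : Y) (y : Y) : EReal :=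
  sInf ((fun t : ℝ => (t : EReal)) '' {t : ℝ | y - t • k ∈ A})

/-- The algebraic interior (core) of a set. -/
def algCore {Y : Type*} [AddCommGroup Y] [Module ℝ Y] (A : Set Y) : Set Y :=
  {a | a ∈ A ∧ ∀ y : Y, ∃ t : ℝ, 0 < t ∧ ∀ s : ℝ, 0 ≤ s → s ≤ t → a + s • y ∈ A}

/-- The recession cone `0⁺A`. -/
def recCone {Y : Type*} [AddCommGroup Y] [Module ℝ Y] (A : Set Y) : Set Y :=
  {u | ∀ a ∈ A, ∀ t : ℝ, 0 ≤ t → a + t • u ∈ A}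

/-- `A` is `k`-directionally closed. -/
def DirClosed {Y : Type*} [AddCommGroup Y] [Module ℝ Y] (A : Set Y) (k : Y) : Prop :=
  ∀ y : Y, (∃ t : ℕ → ℝ, (∀ n, 0 < t n) ∧ Antitone t ∧
    Filter.Tendsto t Filter.atTop (nhds 0) ∧ ∀ n, y - t n • k ∈ A) → y ∈ A

/-- `A` is algebraically closed. -/
def AlgClosed {Y : Type*} [AddCommGroup Y] [Module ℝ Y] (A : Set Y) : Prop :=
  ∀ a ∈ A, ∀ y : Y, (∀ l : ℝ, 0 < l → l < 1 → a + l • (y - a) ∈ A) → y ∈ A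

/-- `C` is a cone: closed under nonnegative scalar multiplication. -/
def IsCone {Y : Type*} [AddCommGroup Y] [Module ℝ Y] (C : Set Y) : Prop :=
  ∀ l : ℝ, 0 ≤ l → ∀ c ∈ C, l • c ∈ C

/-! Since `-k ∈ 0⁺A`, the set `{t | y - t • k ∈ A}` is upward closed in `ℝ`, hence empty, a
half-line, or all of `ℝ`; `phi A k y` is its infimum. -/

section

variable {Y : Type*} [AddCommGroup Y] [Module ℝ Y] {A : Set Y} {k y : Y}

lemma sub_smul_mem_of_le (hrec : -k ∈ recCone A) {t s : ℝ} (ht : y - t • k ∈ A) (hts : t ≤ s) :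
    y - s • k ∈ A := by
  have h := hrec _ ht (s - t) (sub_nonneg.2 hts)
  rwa [show y - t • k + (s - t) • -k = y - s • k by rw [smul_neg, sub_smul]; abel] at h

lemma phi_le {t : ℝ} (ht : y - t • k ∈ A) : phi A k y ≤ t :=
  sInf_le ⟨t, ht, rfl⟩

lemma exists_sub_smul_mem_of_phi_lt {r : ℝ} (h : phi A k y < r) : ∃ t < r, y - t • k ∈ A := by
  obtain ⟨_, ⟨t, ht, rfl⟩, htr⟩ := sInf_lt_iff.1 h
  exact ⟨t, EReal.coe_lt_coe_iff.1 htr, ht⟩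

lemma phi_ne_top_iff : phi A k y ≠ ⊤ ↔ ∃ t : ℝ, y - t • k ∈ A := by
  refine ⟨fun h => ?_, fun ⟨t, ht⟩ => ((phi_le ht).trans_lt (EReal.coe_lt_top t)).ne⟩
  by_contra hempty
  have hT : {t : ℝ | y - t • k ∈ A} = ∅ := Set.eq_empty_iff_forall_notMem.2 (not_exists.1 hempty)
  exact h (by rw [phi, hT, Set.image_empty, sInf_empty])

lemma phi_ne_top_iff_of_neg_mem_recCone (hrec : -k ∈ recCone A) :
    phi A k y ≠ ⊤ ↔ ∃ a ∈ A, ∃ t : ℝ, 0 < t ∧ y = a + t • k := by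
  rw [phi_ne_top_iff]
  constructor
  · rintro ⟨t, ht⟩
    have hpos : 0 < |t| + 1 := by positivity
    exact ⟨_, sub_smul_mem_of_le hrec ht (by linarith [le_abs_self t]), _, hpos,
      (sub_add_cancel _ _).symm⟩
  · rintro ⟨a, ha, t, -, rfl⟩
    exact ⟨t, by simpa using ha⟩

lemma phi_eq_bot_iff (hrec : -k ∈ recCone A) : phi A k y = ⊥ ↔ ∀ t : ℝ, y + t • k ∈ A := by
  constructor
  · intro h t
    obtain ⟨s, hst, hs⟩ := exists_sub_smul_mem_of_phi_lt (h ▸ EReal.bot_lt_coe (-t))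
    simpa using sub_smul_mem_of_le hrec hs hst.le
  · intro h
    refine (EReal.eq_bot_iff_forall_lt _).2 fun r => ?_
    have hmem : y - (r - 1) • k ∈ A := by rw [sub_eq_add_neg, ← neg_smul]; exact h _
    exact (phi_le hmem).trans_lt (EReal.coe_lt_coe_iff.2 (sub_one_lt r))

end

theorem phi_dom_and_bot_general {Y : Type*} [AddCommGroup Y] [Module ℝ Y]
    (A : Set Y) (k : Y)
    (hrec : -k ∈ recCone A) :
    ({y : Y | phi A k y ≠ ⊤} = {y : Y | ∃ a ∈ A, ∃ t : ℝ, 0 < t ∧ y = a + t • k}) ∧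
    (∀ y : Y, phi A k y = ⊥ ↔ ∀ t : ℝ, y + t • k ∈ A) ∧
    (∀ y : Y, phi A k y ≠ ⊤ → y ∉ A → ∃ r : ℝ, phi A k y = (r : EReal)) := by
  refine ⟨Set.ext fun _ => phi_ne_top_iff_of_neg_mem_recCone hrec,
    fun _ => phi_eq_bot_iff hrec, fun y hTop hyA => ?_⟩
  have hBot : phi A k y ≠ ⊥ := fun h => hyA (by simpa using (phi_eq_bot_iff hrec).1 h 0)
  exact ⟨_, (EReal.coe_toReal hTop hBot).symm⟩

theorem phi_dom_and_bot {Y : Type*} [AddCommGroup Y] [Module ℝ Y]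
    (A : Set Y) (hA : A.Nonempty) (k : Y) (hk : k ≠ 0)
    (hrec : -k ∈ recCone A) :
    ({y : Y | phi A k y ≠ ⊤} = {y : Y | ∃ a ∈ A, ∃ t : ℝ, 0 < t ∧ y = a + t • k}) ∧
    (∀ y : Y, phi A k y = ⊥ ↔ ∀ t : ℝ, y + t • k ∈ A) ∧
    (∀ y : Y, phi A k y ≠ ⊤ → y ∉ A → ∃ r : ℝ, phi A k y = (r : EReal)) :=
  phi_dom_and_bot_general A k hrec
end

section
/- If A is a non-trivial convex cone and k ∈ −core A, then A is k-directionally closed if and only if A is algebraically closed. -/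
section DirectionalClosedness

variable {Y : Type*} [AddCommGroup Y] [Module ℝ Y] {A : Set Y} {k y : Y}

theorem IsCone.add_mem (hcone : IsCone A) (hconv : Convex ℝ A) {x z : Y} (hx : x ∈ A)
    (hz : z ∈ A) : x + z ∈ A := by
  have hmid : (1 / 2 : ℝ) • x + (1 / 2 : ℝ) • z ∈ A :=
    hconv hx hz (by norm_num) (by norm_num) (by norm_num)
  have hsum : (2 : ℝ) • ((1 / 2 : ℝ) • x + (1 / 2 : ℝ) • z) = x + z := by
    rw [smul_add, smul_smul, smul_smul]; norm_num
  simpa only [hsum] using hcone 2 (by norm_num) _ hmid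

theorem IsCone.sub_smul_mem_of_le (hcone : IsCone A) (hconv : Convex ℝ A) (hk : -k ∈ A)
    {t s : ℝ} (hts : t ≤ s) (hy : y - t • k ∈ A) : y - s • k ∈ A := by
  have hsum : (y - t • k) + (s - t) • (-k) = y - s • k := by
    rw [smul_neg, sub_smul]; abel
  simpa only [hsum] using hcone.add_mem hconv hy (hcone _ (sub_nonneg.2 hts) _ hk)

theorem IsCone.sub_smul_mem_of_tendsto (hcone : IsCone A) (hconv : Convex ℝ A) (hk : -k ∈ A)
    {t : ℕ → ℝ} (ht : Filter.Tendsto t Filter.atTop (nhds 0)) (hy : ∀ n, y - t n • k ∈ A)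
    {s : ℝ} (hs : 0 < s) : y - s • k ∈ A := by
  obtain ⟨n, hn⟩ := (ht.eventually_le_const hs).exists
  exact hcone.sub_smul_mem_of_le hconv hk hn (hy n)

theorem IsCone.sub_smul_mem_of_segment (hcone : IsCone A) (hconv : Convex ℝ A)
    (hk : -k ∈ algCore A) {a : Y}
    (hseg : ∀ l : ℝ, 0 < l → l < 1 → a + l • (y - a) ∈ A) {s : ℝ} (hs : 0 < s) :
    y - s • k ∈ A := by
  obtain ⟨t, ht, hcore⟩ := hk.2 (y - a)
  set m : ℝ := min (s * t) (1 / 2)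
  have hm0 : 0 < m := lt_min (mul_pos hs ht) (by norm_num)
  have hm1 : m < 1 := (min_le_right _ _).trans_lt (by norm_num)
  have hnear : a + (1 - m) • (y - a) ∈ A := hseg _ (by linarith) (by linarith)
  have hmst : m / s ≤ t := by
    rw [div_le_iff₀ hs, mul_comm t]; exact min_le_left _ _
  have hdir : -k + (m / s) • (y - a) ∈ A := hcore _ (div_pos hm0 hs).le hmst
  have hsum : (a + (1 - m) • (y - a)) + s • (-k + (m / s) • (y - a)) = y - s • k := by
    rw [smul_add, smul_smul, mul_div_cancel₀ _ hs.ne', sub_smul, one_smul, smul_neg]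
    abel
  simpa only [hsum] using hcone.add_mem hconv hnear (hcone s hs.le _ hdir)

theorem DirClosed.mem_of_forall_pos (hA : DirClosed A k)
    (hy : ∀ s : ℝ, 0 < s → y - s • k ∈ A) : y ∈ A := by
  refine hA y ⟨fun n => 1 / ((n : ℝ) + 1), fun n => by positivity, ?_,
    tendsto_one_div_add_atTop_nhds_zero_nat, fun n => hy _ (by positivity)⟩
  intro m n hmn
  dsimp only
  gcongr

theorem AlgClosed.mem_of_forall_pos (hA : AlgClosed A)
    (hy : ∀ s : ℝ, 0 < s → y - s • k ∈ A) : y ∈ A := by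
  refine hA (y - k) (by simpa using hy 1 one_pos) y fun l hl0 hl1 => ?_
  have hpt : y - k + l • (y - (y - k)) = y - (1 - l) • k := by
    rw [sub_sub_cancel, sub_smul, one_smul]; abel
  simpa only [hpt] using hy _ (by linarith)

end DirectionalClosedness

theorem dirClosed_iff_algClosed_cone_general {Y : Type*} [AddCommGroup Y] [Module ℝ Y]
    (A : Set Y) (hconv : Convex ℝ A) (hcone : IsCone A)
    (k : Y) (hk : -k ∈ algCore A) :
    DirClosed A k ↔ AlgClosed A := by
  constructor
  · intro hA a _ y hseg
    exact hA.mem_of_forall_pos fun s hs => hcone.sub_smul_mem_of_segment hconv hk hseg hs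
  · rintro hA y ⟨t, -, -, ht, hy⟩
    exact hA.mem_of_forall_pos fun s hs => hcone.sub_smul_mem_of_tendsto hconv hk.1 ht hy hs

theorem dirClosed_iff_algClosed_cone {Y : Type*} [AddCommGroup Y] [Module ℝ Y]
    (A : Set Y) (hconv : Convex ℝ A) (hcone : IsCone A)
    (hne : A.Nonempty) (hA0 : A ≠ {0}) (hAuniv : A ≠ Set.univ)
    (k : Y) (hk : -k ∈ algCore A) :
    DirClosed A k ↔ AlgClosed A :=
  dirClosed_iff_algClosed_cone_general A hconv hcone k hk
end
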